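/- arXiv:1312.6612 — 7 statements merged into one kernel-verified Lean document; each statement's English description precedes it below -/
import Mathlib

section
/- Let R be an integral domain and A a free R-algebra of rank 2 (as an R-module). Then there exists x ∈ A such that {1, x} is an R-basis of A. -/
/-!
If a linear form `f` sends `v = a • e 0 + b • e 1` to `1`, then `v` and
`w = -f (e 1) • e 0 + f (e 0) • e 1` form a basis, as their determinant is
`a f(e 0) + b f(e 1) = f v = 1`. In an algebra with basis `e`, the form `y ↦ e.coord 0 (y * e 0)`
sends `1` to `1`.
-/

namespace Module.Basis

variable {R M : Type*} [CommRing R] [AddCommGroup M] [Module R M]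

theorem exists_basis_fin_two_apply_zero_eq (e : Basis (Fin 2) R M) (f : M →ₗ[R] R) {v : M}
    (hv : f v = 1) : ∃ b : Basis (Fin 2) R M, b 0 = v := by
  set w := -f (e 1) • e 0 + f (e 0) • e 1
  have hdet : e.det ![v, w] = f v := by
    conv_rhs => rw [← e.sum_repr v, Fin.sum_univ_two]
    simp only [w, neg_smul, e.det_apply, Matrix.det_fin_two, toMatrix_apply, Matrix.cons_val_zero,
      Matrix.cons_val_one, Matrix.cons_val_fin_one, map_add, map_neg, map_smul, repr_self,
      Finsupp.smul_single, smul_eq_mul, mul_one, Finsupp.coe_add, Finsupp.coe_neg, Pi.add_apply,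
      Pi.neg_apply, Finsupp.single_eq_same, Finsupp.single_eq_of_ne one_ne_zero,
      Finsupp.single_eq_of_ne zero_ne_one, neg_zero, zero_add, add_zero, neg_mul, sub_neg_eq_add]
    ring
  obtain ⟨hli, hsp⟩ := (is_basis_iff_det e (v := ![v, w])).mpr (by simp [hdet, hv])
  exact ⟨Basis.mk hli hsp.ge, by simp⟩

end Module.Basis

theorem free_rank_two_has_basis_containing_one_general
    (R A : Type*) [CommRing R] [Ring A] [Algebra R A]
    (hfree : Nonempty (Module.Basis (Fin 2) R A)) :
    ∃ (x : A) (b : Module.Basis (Fin 2) R A), b 0 = 1 ∧ b 1 = x := by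
  obtain ⟨e⟩ := hfree
  obtain ⟨b, hb⟩ := e.exists_basis_fin_two_apply_zero_eq
    (e.coord 0 ∘ₗ LinearMap.mulRight R (e 0)) (v := 1) (by simp)
  exact ⟨b 1, b, hb, rfl⟩

/-- Every free algebra of rank 2 over a domain has a basis of the form {1, x}. -/
theorem free_rank_two_has_basis_containing_one
    (R A : Type*) [CommRing R] [IsDomain R] [Ring A] [Algebra R A]
    (hinj : Function.Injective (algebraMap R A))
    (hfree : Nonempty (Module.Basis (Fin 2) R A)) :
    ∃ (x : A) (b : Module.Basis (Fin 2) R A), b 0 = 1 ∧ b 1 = x :=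
  free_rank_two_has_basis_containing_one_general R A hfree
end

section
/- Let F be a field of characteristic 2. For a, b ∈ F, the F-algebras F[x]/(x² + x + a) and F[y]/(y² + y + b) are isomorphic if and only if a − b ∈ ℘(F), where ℘(F) = {r + r² : r ∈ F}. -/
/-! An `F`-algebra map `F[x]/(x² + x + a) → F[y]/(y² + y + b)` sends `x` to some `c + d y` that
is a root of `x² + x + a`. In characteristic 2 this root condition reads
`(c² + c + a + d² b) + (d² + d) y = 0`, so `d ∈ {0, 1}`: `d = 0` contradicts injectivity and
`d = 1` gives `a - b = c + c²`. Conversely, if `a - b = r + r²`, the substitution `x ↦ y + r`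
transforms `x² + x + a` into `y² + y + b`. -/

open Polynomial

namespace AdjoinRoot

section CommRing

variable {R : Type*} [CommRing R]

noncomputable def compXAddCEquiv (f : R[X]) (r : R) :
    AdjoinRoot f ≃ₐ[R] AdjoinRoot (f.comp (X + C r)) :=
  AlgEquiv.ofAlgHom
    (liftAlgHom f (Algebra.ofId R _) (root _ + algebraMap R _ r) <| by
      have h : aeval (root (f.comp (X + C r))) (f.comp (X + C r)) = 0 :=
        (aeval_eq _).trans mk_self
      rw [aeval_comp, map_add, aeval_X, aeval_C] at h
      rwa [Algebra.toRingHom_ofId, ← aeval_def])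
    (liftAlgHom _ (Algebra.ofId R _) (root f - algebraMap R _ r) <| by
      rw [Algebra.toRingHom_ofId, ← aeval_def, aeval_comp]
      simp)
    (algHom_ext <| by simp)
    (algHom_ext <| by simp)

theorem exists_eq_algebraMap_add_algebraMap_mul_root [Nontrivial R] {f : R[X]} (hf : f.Monic)
    (hf2 : f.natDegree ≤ 2) (t : AdjoinRoot f) :
    ∃ c d : R, t = algebraMap R _ c + algebraMap R _ d * root f := by
  obtain ⟨p, rfl⟩ := mk_surjective t
  have hdeg : (p %ₘ f).degree ≤ 1 :=
    Order.lt_succ_iff.mp <| (degree_modByMonic_lt p hf).trans_le (degree_le_of_natDegree_le hf2)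
  refine ⟨(p %ₘ f).coeff 0, (p %ₘ f).coeff 1, ?_⟩
  rw [← mk_leftInverse hf (mk f p), modByMonicHom_mk, eq_X_add_C_of_degree_le_one hdeg]
  simp [add_comm]

end CommRing

section Field

variable {K : Type*} [Field K] {f : K[X]}

theorem root_ne_algebraMap (hf : 1 < f.natDegree) (c : K) : root f ≠ algebraMap K _ c := by
  intro h
  have hdvd : f ∣ X - C c := by
    rw [← mk_eq_zero, map_sub, mk_X, mk_C]
    exact sub_eq_zero.mpr h
  have := natDegree_le_of_dvd hdvd (X_sub_C_ne_zero c)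
  rw [natDegree_X_sub_C] at this
  omega

theorem eq_zero_of_algebraMap_add_algebraMap_mul_root_eq_zero (hf : 1 < f.natDegree) {e d : K}
    (h : algebraMap K (AdjoinRoot f) e + algebraMap K _ d * root f = 0) : e = 0 ∧ d = 0 := by
  have hd : d = 0 := by
    by_contra hd
    have hinv : algebraMap K (AdjoinRoot f) d⁻¹ * algebraMap K _ d = 1 := by
      rw [← map_mul, inv_mul_cancel₀ hd, map_one]
    refine root_ne_algebraMap hf (-e * d⁻¹) ?_
    rw [map_mul, map_neg]
    linear_combination algebraMap K _ d⁻¹ * h - root f * hinv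
  subst hd
  have hdeg : f.degree ≠ 0 := (natDegree_pos_iff_degree_pos.mp (by omega)).ne'
  exact ⟨of.injective_of_degree_ne_zero hdeg (by simpa using h), rfl⟩

end Field

end AdjoinRoot

namespace Polynomial

variable {R : Type*} [CommRing R]

theorem monic_X_sq_add_X_add_C [Nontrivial R] (a : R) : (X ^ 2 + X + C a).Monic := by
  monicity!

theorem natDegree_X_sq_add_X_add_C [Nontrivial R] (a : R) :
    (X ^ 2 + X + C a).natDegree = 2 := by
  compute_degree!

variable [CharP R 2]

theorem X_sq_add_X_add_C_comp_X_add_C (a r : R) :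
    (X ^ 2 + X + C a).comp (X + C r) = X ^ 2 + X + C (a + r + r ^ 2) := by
  simp only [add_comp, X_pow_comp, X_comp, C_comp, CharTwo.add_sq, C_add, C_pow]
  ring

theorem aeval_X_sq_add_X_add_C_algebraMap_add_mul {A : Type*} [CommRing A] [Algebra R A]
    {b : R} {ρ : A} (hρ : aeval ρ (X ^ 2 + X + C b) = 0) (a c d : R) :
    aeval (algebraMap R A c + algebraMap R A d * ρ) (X ^ 2 + X + C a) =
      algebraMap R A (c ^ 2 + c + a + d ^ 2 * b) + algebraMap R A (d ^ 2 + d) * ρ := by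
  have h2 : (2 : A) = 0 := by rw [← map_ofNat (algebraMap R A), CharTwo.two_eq_zero, map_zero]
  simp only [map_add, map_pow, map_mul, aeval_X, aeval_C] at hρ ⊢
  linear_combination (algebraMap R A d) ^ 2 * hρ
    + (algebraMap R A c * algebraMap R A d * ρ
      - algebraMap R A d ^ 2 * (ρ + algebraMap R A b)) * h2

end Polynomial

open AdjoinRoot in
theorem exists_sub_eq_add_sq_of_algHom {F : Type*} [Field F] [CharP F 2] {a b : F}
    (φ : AdjoinRoot (X ^ 2 + X + C a) →ₐ[F] AdjoinRoot (X ^ 2 + X + C b))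
    (hφ : Function.Injective φ) : ∃ r : F, a - b = r + r ^ 2 := by
  have hdeg (x : F) : 1 < (X ^ 2 + X + C x).natDegree := by
    rw [natDegree_X_sq_add_X_add_C]; norm_num
  obtain ⟨c, d, hcd⟩ := exists_eq_algebraMap_add_algebraMap_mul_root (monic_X_sq_add_X_add_C b)
    (natDegree_X_sq_add_X_add_C b).le (φ (root _))
  have hroot := aeval_algHom_eq_zero _ φ
  rw [hcd, aeval_X_sq_add_X_add_C_algebraMap_add_mul ((aeval_eq _).trans mk_self)] at hroot
  obtain ⟨hc, hd⟩ := eq_zero_of_algebraMap_add_algebraMap_mul_root_eq_zero (hdeg b) hroot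
  have h2 : (2 : F) = 0 := CharTwo.two_eq_zero
  have hd01 : d = 0 ∨ d = 1 := by
    have : d * (d - 1) = 0 := by linear_combination hd - d * h2
    simpa [sub_eq_zero] using this
  rcases hd01 with rfl | rfl
  · refine absurd (hφ ?_) (root_ne_algebraMap (hdeg a) c)
    rw [AlgHom.commutes, hcd, map_zero, zero_mul, add_zero]
  · exact ⟨c, by linear_combination -hc + a * h2⟩

/-- Over a field of characteristic 2, F[x]/(x²+x+a) ≅ F[y]/(y²+y+b) iff
a - b lies in the Artin–Schreier group ℘(F) = {r + r² : r ∈ F}. -/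
theorem char_two_artin_schreier_classification
    (F : Type*) [Field F] [CharP F 2] (a b : F) :
    Nonempty (AdjoinRoot (X ^ 2 + X + C a) ≃ₐ[F] AdjoinRoot (X ^ 2 + X + C b)) ↔
      ∃ r : F, a - b = r + r ^ 2 := by
  refine ⟨fun ⟨φ⟩ => exists_sub_eq_add_sq_of_algHom φ.toAlgHom φ.injective,
    fun ⟨r, h⟩ => ?_⟩
  have hb : b = a + r + r ^ 2 := by
    linear_combination -h - (r + r ^ 2) * CharTwo.two_eq_zero (R := F)
  rw [hb, ← X_sq_add_X_add_C_comp_X_add_C]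
  exact ⟨AdjoinRoot.compXAddCEquiv _ r⟩
end

section
/- Every finite-dimensional associative division algebra over ℝ is isomorphic as an ℝ-algebra to ℝ, ℂ, or the quaternions ℍ (Frobenius's theorem). -/
/-!
An `x ∉ ℝ` has a quadratic minimal polynomial, and completing the square writes it as
`x = a + b u` with `u² = -1`; hence everything commuting with such a `u` lies in `ℝ[u] ≅ ℂ`.
Conjugation by `u` splits `D` into the parts commuting and anticommuting with `u`. If some
`w ≠ 0` anticommutes with `u`, then `w²` commutes with both `u` and `w`, so it is a negative
real, and rescaling `w` gives `j` with `j² = -1` and `j u = -u j`. Right multiplication by `j`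
swaps the two parts, so `D = ℂ ⊕ ℂ j ≅ ℍ`.
-/

open Polynomial Quaternion

namespace Frobenius

theorem ne_zero_of_mul_self_eq_neg_one {R : Type*} [Ring R] [Nontrivial R] {u : R}
    (hu : u * u = -1) : u ≠ 0 :=
  left_ne_zero_of_mul (hu ▸ neg_ne_zero.mpr one_ne_zero)

section Algebra

variable {A : Type*} [Ring A] [Algebra ℝ A] {u j : A}

theorem exists_eq_add_of_commute_of_anticommute (hu : u * u = -1) (d : A) :
    ∃ p m : A, d = p + m ∧ Commute p u ∧ m * u = -(u * m) := by
  have h₁ : u * d * u * u = -(u * d) := by rw [mul_assoc, hu, mul_neg_one]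
  have h₂ : u * (u * d * u) = -(d * u) := by rw [← mul_assoc, ← mul_assoc, hu]; noncomm_ring
  refine ⟨(2⁻¹ : ℝ) • (d - u * d * u), (2⁻¹ : ℝ) • (d + u * d * u), by module, ?_, ?_⟩
  · rw [Commute, SemiconjBy, smul_mul_assoc, mul_smul_comm, sub_mul, mul_sub, h₁, h₂]
    abel_nf
  · rw [smul_mul_assoc, mul_smul_comm, ← smul_neg, add_mul, mul_add, h₁, h₂]
    abel_nf

def quaternionBasis (hu : u * u = -1) (hj : j * j = -1) (hju : j * u = -(u * j)) :
    QuaternionAlgebra.Basis A (-1 : ℝ) 0 (-1) where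
  i := u
  j := j
  k := u * j
  i_mul_i := by rw [hu]; simp
  j_mul_j := by rw [hj]; simp
  i_mul_j := rfl
  j_mul_i := by rw [hju]; simp

end Algebra

variable {D : Type*} [DivisionRing D] [Algebra ℝ D]

theorem mem_range_algebraMap_of_mul_self_eq {y : D} {t : ℝ} (ht : 0 ≤ t)
    (hy : y * y = algebraMap ℝ D t) : y ∈ (algebraMap ℝ D).range := by
  have hsq : y * y = algebraMap ℝ D √t * algebraMap ℝ D √t := by
    rw [← map_mul, Real.mul_self_sqrt ht, hy]
  rcases (Algebra.commute_algebraMap_right √t y).mul_self_eq_mul_self_iff.mp hsq with h | h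
  · exact ⟨√t, h.symm⟩
  · exact ⟨-√t, by rw [map_neg, h]⟩

theorem eq_zero_of_commute_of_mul_eq_neg {x y : D} (hy : y ≠ 0) (hc : Commute x y)
    (ha : x * y = -(y * x)) : x = 0 := by
  have : CharZero D := charZero_of_injective_algebraMap (algebraMap ℝ D).injective
  rw [← hc.eq, self_eq_neg, mul_eq_zero] at ha
  exact ha.resolve_right hy

theorem exists_mul_self_add_smul_add_eq_zero [FiniteDimensional ℝ D] {x : D}
    (hx : x ∉ (algebraMap ℝ D).range) :
    ∃ b c : ℝ, x * x + b • x + algebraMap ℝ D c = 0 := by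
  have hint : IsIntegral ℝ x := .of_finite ℝ x
  have hdeg : (minpoly ℝ x).natDegree = 2 :=
    le_antisymm (minpoly.irreducible hint).natDegree_le_two
      ((minpoly.two_le_natDegree_iff hint).mpr hx)
  have hlead : (minpoly ℝ x).coeff 2 = 1 := hdeg ▸ minpoly.monic hint
  refine ⟨(minpoly ℝ x).coeff 1, (minpoly ℝ x).coeff 0, ?_⟩
  have h := minpoly.aeval ℝ x
  rw [aeval_eq_sum_range, hdeg] at h
  simp only [Finset.sum_range_succ, Finset.sum_range_zero, hlead] at h
  rw [← h, Algebra.algebraMap_eq_smul_one]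
  simp only [pow_zero, pow_one, one_smul, sq]
  abel

theorem exists_mul_self_eq_neg_one_of_notMem_range [FiniteDimensional ℝ D] {x : D}
    (hx : x ∉ (algebraMap ℝ D).range) :
    ∃ u : D, u * u = -1 ∧ ∃ a b : ℝ, b ≠ 0 ∧ x = algebraMap ℝ D a + b • u := by
  obtain ⟨b, c, hbc⟩ := exists_mul_self_add_smul_add_eq_zero hx
  set y := x + algebraMap ℝ D (b / 2)
  have hy : y * y = algebraMap ℝ D (b ^ 2 / 4 - c) := by
    simp only [y, Algebra.algebraMap_eq_smul_one] at hbc ⊢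
    simp only [add_mul, mul_add, smul_mul_assoc, mul_smul_comm, one_mul, mul_one]
    linear_combination (norm := module) hbc
  have hy_notMem : y ∉ (algebraMap ℝ D).range := fun ⟨r, hr⟩ ↦
    hx ⟨r - b / 2, by rw [map_sub, hr, add_sub_cancel_right]⟩
  have hs : 0 < c - b ^ 2 / 4 := by
    by_contra! h
    exact hy_notMem (mem_range_algebraMap_of_mul_self_eq (by linarith) hy)
  set s := √(c - b ^ 2 / 4)
  have hs0 : 0 < s := Real.sqrt_pos.mpr hs
  refine ⟨s⁻¹ • y, ?_, -(b / 2), s, hs0.ne', ?_⟩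
  · have hss : s * s = c - b ^ 2 / 4 := Real.mul_self_sqrt hs.le
    rw [smul_mul_smul_comm, hy, Algebra.algebraMap_eq_smul_one, smul_smul,
      show s⁻¹ * s⁻¹ * (b ^ 2 / 4 - c) = -1 by field_simp; linarith, neg_one_smul]
  · rw [smul_smul, mul_inv_cancel₀ hs0.ne', one_smul, map_neg]
    simp only [y]
    abel

section ImaginaryUnit

variable {u : D}

theorem mem_range_liftAux_of_commute [FiniteDimensional ℝ D] (hu : u * u = -1) {z : D}
    (hz : Commute z u) : z ∈ Set.range (Complex.liftAux u hu) := by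
  by_cases hz_real : z ∈ (algebraMap ℝ D).range
  · obtain ⟨a, rfl⟩ := hz_real
    exact ⟨a, by simp⟩
  obtain ⟨v, hv, a, b, hb, rfl⟩ := exists_mul_self_eq_neg_one_of_notMem_range hz_real
  have hvu : Commute v u := by
    have hbv : Commute (b • v) u := by
      simpa using hz.sub_left (Algebra.commute_algebraMap_left a u)
    simpa [smul_smul, inv_mul_cancel₀ hb] using hbv.smul_left b⁻¹
  rcases hvu.mul_self_eq_mul_self_iff.mp (hv.trans hu.symm) with rfl | rfl
  · exact ⟨⟨a, b⟩, Complex.liftAux_apply _ _ _⟩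
  · exact ⟨⟨a, -b⟩, by rw [Complex.liftAux_apply, neg_smul, smul_neg]⟩

theorem exists_mul_self_eq_algebraMap_of_anticommute [FiniteDimensional ℝ D]
    (hu : u * u = -1) {w : D} (hw0 : w ≠ 0) (hw : w * u = -(u * w)) :
    ∃ t : ℝ, w * w = algebraMap ℝ D t := by
  have hww : Commute (w * w) u := by
    rw [Commute, SemiconjBy, mul_assoc, hw, mul_neg, ← mul_assoc, hw, neg_mul, neg_neg,
      mul_assoc]
  obtain ⟨z, hz⟩ := mem_range_liftAux_of_commute hu hww
  rw [Complex.liftAux_apply] at hz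
  -- `w` commutes with `w * w` but anticommutes with `u`, so the `u`-component of `w * w` is `0`
  have hbu : z.im • u = 0 := by
    refine eq_zero_of_commute_of_mul_eq_neg hw0 ?_ ?_
    · rw [eq_sub_of_add_eq' hz]
      exact ((Commute.refl w).mul_left (Commute.refl w)).sub_left
        (Algebra.commute_algebraMap_left _ w)
    · rw [smul_mul_assoc, mul_smul_comm, hw, smul_neg, neg_neg]
  exact ⟨z.re, by rw [← hz, hbu, add_zero]⟩

theorem exists_mul_self_eq_neg_one_of_anticommute [FiniteDimensional ℝ D] (hu : u * u = -1)
    {w : D} (hw0 : w ≠ 0) (hw : w * u = -(u * w)) : ∃ j : D, j * j = -1 ∧ j * u = -(u * j) := by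
  obtain ⟨t, ht⟩ := exists_mul_self_eq_algebraMap_of_anticommute hu hw0 hw
  have ht0 : t < 0 := by
    by_contra! ht0
    obtain ⟨r, rfl⟩ := mem_range_algebraMap_of_mul_self_eq ht0 ht
    exact hw0 (eq_zero_of_commute_of_mul_eq_neg (ne_zero_of_mul_self_eq_neg_one hu)
      (Algebra.commute_algebraMap_left r u) hw)
  set s := √(-t)
  have hs0 : 0 < s := Real.sqrt_pos.mpr (neg_pos.mpr ht0)
  have hss : s * s = -t := Real.mul_self_sqrt (neg_nonneg.mpr ht0.le)
  refine ⟨s⁻¹ • w, ?_, ?_⟩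
  · rw [smul_mul_smul_comm, ht, Algebra.algebraMap_eq_smul_one, smul_smul,
      show s⁻¹ * s⁻¹ * t = -1 by field_simp; linarith, neg_one_smul]
  · rw [smul_mul_assoc, mul_smul_comm, hw, smul_neg]

variable {j : D}

theorem exists_eq_add_mul_of_anticommute [FiniteDimensional ℝ D] (hu : u * u = -1)
    (hj : j * j = -1) (hju : j * u = -(u * j)) (d : D) :
    ∃ ζ₁ ζ₂ : ℂ, d = Complex.liftAux u hu ζ₁ + Complex.liftAux u hu ζ₂ * j := by
  obtain ⟨p, m, rfl, hp, hm⟩ := exists_eq_add_of_commute_of_anticommute hu d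
  obtain ⟨ζ₁, rfl⟩ := mem_range_liftAux_of_commute hu hp
  have hmj : Commute (m * j) u := by
    rw [Commute, SemiconjBy, mul_assoc, hju, mul_neg, ← mul_assoc, hm, neg_mul, neg_neg,
      mul_assoc]
  obtain ⟨ζ₂, hζ₂⟩ := mem_range_liftAux_of_commute hu hmj
  refine ⟨ζ₁, -ζ₂, ?_⟩
  rw [map_neg, hζ₂, neg_mul, mul_assoc, hj, mul_neg_one, neg_neg]

theorem bijective_liftHom_quaternionBasis [FiniteDimensional ℝ D] (hu : u * u = -1)
    (hj : j * j = -1) (hju : j * u = -(u * j)) :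
    Function.Bijective ((quaternionBasis hu hj hju).liftHom : ℍ[ℝ] →ₐ[ℝ] D) := by
  refine ⟨RingHom.injective (R := ℍ[ℝ]) (quaternionBasis hu hj hju).liftHom.toRingHom,
    fun d ↦ ?_⟩
  obtain ⟨ζ₁, ζ₂, rfl⟩ := exists_eq_add_mul_of_anticommute hu hj hju d
  refine ⟨⟨ζ₁.re, ζ₁.im, ζ₂.re, ζ₂.im⟩, ?_⟩
  simp only [QuaternionAlgebra.Basis.liftHom_apply, QuaternionAlgebra.Basis.lift,
    quaternionBasis, Complex.liftAux_apply, add_mul, smul_mul_assoc, ← Algebra.smul_def]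
  abel

end ImaginaryUnit

end Frobenius

open Frobenius in
/-- Frobenius: every finite-dimensional division algebra over ℝ is isomorphic to
ℝ, ℂ, or the Hamilton quaternions ℍ. -/
theorem frobenius_classification (D : Type*) [DivisionRing D] [Algebra ℝ D]
    [FiniteDimensional ℝ D] :
    Nonempty (D ≃ₐ[ℝ] ℝ) ∨ Nonempty (D ≃ₐ[ℝ] ℂ) ∨ Nonempty (D ≃ₐ[ℝ] ℍ[ℝ]) := by
  by_cases hreal : ∀ x : D, x ∈ (algebraMap ℝ D).range
  · exact .inl ⟨(AlgEquiv.ofBijective (Algebra.ofId ℝ D)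
      ⟨(algebraMap ℝ D).injective, hreal⟩).symm⟩
  obtain ⟨x, hx⟩ := not_forall.mp hreal
  obtain ⟨u, hu, -⟩ := exists_mul_self_eq_neg_one_of_notMem_range hx
  by_cases hcomm : ∀ d : D, Commute d u
  · exact .inr <| .inl ⟨(AlgEquiv.ofBijective (Complex.liftAux u hu)
      ⟨(Complex.liftAux u hu : ℂ →+* D).injective,
        fun d ↦ mem_range_liftAux_of_commute hu (hcomm d)⟩).symm⟩
  obtain ⟨d, hd⟩ := not_forall.mp hcomm
  obtain ⟨p, m, rfl, hp, hm⟩ := exists_eq_add_of_commute_of_anticommute hu d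
  have hm0 : m ≠ 0 := by
    rintro rfl
    exact hd (by rwa [add_zero])
  obtain ⟨j, hj, hju⟩ := exists_mul_self_eq_neg_one_of_anticommute hu hm0 hm
  exact .inr <| .inr
    ⟨(AlgEquiv.ofBijective _ (bijective_liftHom_quaternionBasis hu hj hju)).symm⟩
end

section
/- Let B be an exceptional ring over a domain R: B = R ⊕ M with M a left ideal such that xy = t(x)y for all x, y ∈ M, where t : M → R is R-linear. Then the R-linear map extending x ↦ t(x) − x on M and fixing R is a standard involution on B. -/
/-- An exceptional ring B = R ⊕ M (M a left ideal with xy = t(x)y on M, t linear)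
has a standard involution extending x ↦ t(x) - x on M and fixing R. -/
theorem exceptional_ring_standard_involution
    (R B : Type*) [CommRing R] [IsDomain R] [Ring B] [Algebra R B]
    (M : Submodule R B) (hideal : ∀ b : B, ∀ x ∈ M, b * x ∈ M)
    (hcompl : IsCompl (1 : Submodule R B) M)
    (t : M →ₗ[R] R) (ht : ∀ x y : M, (x : B) * (y : B) = t x • (y : B))
    (σ : B →ₗ[R] B)
    (hσR : ∀ r : R, σ (algebraMap R B r) = algebraMap R B r)
    (hσM : ∀ x : M, σ (x : B) = algebraMap R B (t x) - (x : B)) :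
    (∀ x, σ (σ x) = x) ∧ σ 1 = 1 ∧ (∀ x y, σ (x * y) = σ y * σ x) ∧
      (∀ x : B, ∃ r : R, x * σ x = algebraMap R B r) := by
  have hdec : ∀ b : B, ∃ r : R, ∃ m : M, b = algebraMap R B r + (m : B) := by
    intro b
    have hb : b ∈ (1 : Submodule R B) ⊔ M := by
      rw [hcompl.sup_eq_top]; trivial
    obtain ⟨a, ha, m, hm, rfl⟩ := Submodule.mem_sup.mp hb
    obtain ⟨r, rfl⟩ := Submodule.mem_one.mp ha
    exact ⟨r, ⟨m, hm⟩, rfl⟩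
  refine ⟨?_, ?_, ?_, ?_⟩
  · intro x
    obtain ⟨r, m, rfl⟩ := hdec x
    simp only [map_add, map_sub, hσR, hσM]
    abel
  · have h1 : (1 : B) = algebraMap R B 1 := (map_one _).symm
    rw [h1, hσR]
  · intro x y
    obtain ⟨r, m, rfl⟩ := hdec x
    obtain ⟨s, n, rfl⟩ := hdec y
    have hprod : (algebraMap R B r + (m : B)) * (algebraMap R B s + (n : B))
        = algebraMap R B (r * s) + ((s • m + r • n + t m • n : M) : B) := by
      simp only [Submodule.coe_add, SetLike.val_smul, Algebra.algebraMap_eq_smul_one,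
        mul_add, add_mul, smul_mul_assoc, mul_smul_comm, one_mul, mul_one, ht]
      module
    rw [hprod]
    simp only [map_add, map_sub, map_smul, smul_eq_mul, hσR, hσM, Submodule.coe_add,
      SetLike.val_smul]
    simp only [Algebra.algebraMap_eq_smul_one, mul_add, add_mul, sub_mul, mul_sub,
      smul_mul_assoc, mul_smul_comm, one_mul, mul_one, ht]
    module
  · intro x
    obtain ⟨r, m, rfl⟩ := hdec x
    refine ⟨r * (r + t m), ?_⟩
    simp only [map_add, map_sub, hσR, hσM]
    simp only [Algebra.algebraMap_eq_smul_one, mul_add, add_mul, sub_mul, mul_sub,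
      smul_mul_assoc, mul_smul_comm, one_mul, mul_one, ht]
    module
end

section
/- Let R be a domain and A a free R-algebra of rank 3 with basis 1, i, j. Then the basis can be changed (replacing i by i − f and j by j − e for suitable e, f ∈ R) so that the product ij lies in R·1; that is, every R-algebra of rank 3 has a good basis. -/
/-! Write `i * j = d + e i + f j` in the basis `1, i, j`. Then
`(i - f) * (j - e) = d + f e`, and `1, i - f, j - e` is again a basis since it arises from
`1, i, j` by a transvection fixing `1`. -/

namespace Module.Basis

variable {ι R M : Type*} [CommRing R] [AddCommGroup M] [Module R M]

noncomputable def shear (b : Basis ι R M) (i₀ : ι) (t : ι → R) (ht : t i₀ = 0) :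
    Basis ι R M :=
  b.map (LinearEquiv.transvection (f := b.constr R t) (v := -b i₀) (by simp [ht]))

@[simp]
lemma shear_apply (b : Basis ι R M) (i₀ : ι) (t : ι → R) (ht : t i₀ = 0) (i : ι) :
    b.shear i₀ t ht i = b i - t i • b i₀ := by
  simp [shear, LinearMap.transvection.apply, sub_eq_add_neg]

end Module.Basis

lemma sub_algebraMap_mul_sub_algebraMap {R A : Type*} [CommRing R] [Ring A] [Algebra R A]
    {x y : A} {d e f : R} (h : x * y = algebraMap R A d + e • x + f • y) :
    (x - algebraMap R A f) * (y - algebraMap R A e) = algebraMap R A (d + f * e) := by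
  simp only [sub_mul, mul_sub, h, map_add, map_mul,
    Algebra.algebraMap_eq_smul_one, smul_mul_assoc, mul_smul_comm, one_mul, mul_one, smul_smul]
  module

theorem rank_three_good_basis_general
    (R A : Type*) [CommRing R] [Ring A] [Algebra R A]
    (b : Module.Basis (Fin 3) R A) (hb0 : b 0 = 1) :
    ∃ (e f : R) (c : Module.Basis (Fin 3) R A),
      c 0 = 1 ∧ c 1 = b 1 - algebraMap R A f ∧ c 2 = b 2 - algebraMap R A e ∧
      ∃ d : R, c 1 * c 2 = algebraMap R A d := by
  set d := b.repr (b 1 * b 2) 0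
  set e := b.repr (b 1 * b 2) 1
  set f := b.repr (b 1 * b 2) 2
  have hij : b 1 * b 2 = algebraMap R A d + e • b 1 + f • b 2 := by
    conv_lhs => rw [← b.sum_repr (b 1 * b 2), Fin.sum_univ_three]
    rw [hb0, Algebra.algebraMap_eq_smul_one]
  have hc (k : Fin 3) : b.shear 0 ![0, f, e] rfl k = b k - algebraMap R A (![0, f, e] k) :=
    (b.shear_apply _ _ _ k).trans (by rw [hb0, Algebra.algebraMap_eq_smul_one])
  refine ⟨e, f, b.shear 0 ![0, f, e] rfl, ?_, hc 1, hc 2, d + f * e, ?_⟩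
  · simpa [hb0] using hc 0
  · rw [hc 1, hc 2]
    exact sub_algebraMap_mul_sub_algebraMap hij

/-- Every free R-algebra of rank 3 with basis 1, i, j has a good basis: one can
replace i by i - f and j by j - e so that the product of the new basis vectors
lies in R·1. -/
theorem rank_three_good_basis
    (R A : Type*) [CommRing R] [IsDomain R] [Ring A] [Algebra R A]
    (b : Module.Basis (Fin 3) R A) (hb0 : b 0 = 1) :
    ∃ (e f : R) (c : Module.Basis (Fin 3) R A),
      c 0 = 1 ∧ c 1 = b 1 - algebraMap R A f ∧ c 2 = b 2 - algebraMap R A e ∧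
      ∃ d : R, c 1 * c 2 = algebraMap R A d :=
  rank_three_good_basis_general R A b hb0
end

section
/- Let R be a domain, m, n ∈ R, and let A be the rank-3 R-algebra with basis 1, i, j and multiplication i² = ni, ij = 0, ji = −mn + mi + nj, j² = mj. Then the R-linear map fixing R and sending i ↦ n − i, j ↦ m − j is a standard involution on A; in particular (a + bi + cj)(a + bi + cj)‾ = a(a + bn + cm) + bcmn ∈ R. -/
/-!
Write elements as `a + b i + c j`. The map `σ` sends `a + b i + c j` to `(a + b n + c m) - b i - c j`,
and the multiplication table gives the product of two such elements in closed form; each property of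
a standard involution then becomes a polynomial identity in the coordinates.
-/

theorem Module.Basis.exists_eq_algebraMap_add_smul_add_smul {R A : Type*} [CommSemiring R]
    [Semiring A] [Algebra R A] (bas : Module.Basis (Fin 3) R A) (h1 : bas 0 = 1) (x : A) :
    ∃ a b c : R, x = algebraMap R A a + b • bas 1 + c • bas 2 := by
  refine ⟨bas.repr x 0, bas.repr x 1, bas.repr x 2, ?_⟩
  have hx := bas.sum_repr x
  rwa [Fin.sum_univ_three, h1, ← Algebra.algebraMap_eq_smul_one, eq_comm] at hx

namespace CaseE

variable {R A : Type*} [CommRing R] [Ring A] [Algebra R A]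

structure Table (m n : R) (i j : A) : Prop where
  ii : i * i = n • i
  ij : i * j = 0
  ji : j * i = algebraMap R A (-(m * n)) + m • i + n • j
  jj : j * j = m • j

structure IsConj (σ : A →ₗ[R] A) (m n : R) (i j : A) : Prop where
  map_algebraMap : ∀ r : R, σ (algebraMap R A r) = algebraMap R A r
  map_i : σ i = algebraMap R A n - i
  map_j : σ j = algebraMap R A m - j

variable {m n : R} {i j : A} {σ : A →ₗ[R] A}

theorem Table.mul_eq (h : Table m n i j) (a b c a' b' c' : R) :
    (algebraMap R A a + b • i + c • j) * (algebraMap R A a' + b' • i + c' • j) =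
      algebraMap R A (a * a' - c * b' * (m * n))
        + (a * b' + a' * b + b * b' * n + c * b' * m) • i
        + (a * c' + a' * c + c * b' * n + c * c' * m) • j := by
  simp only [add_mul, mul_add, Algebra.algebraMap_eq_smul_one, smul_mul_assoc, mul_smul_comm,
    one_mul, mul_one, h.ii, h.ij, h.ji, h.jj, smul_zero, smul_add, smul_smul]
  module

theorem IsConj.apply (hσ : IsConj σ m n i j) (a b c : R) :
    σ (algebraMap R A a + b • i + c • j) =
      algebraMap R A (a + b * n + c * m) + (-b) • i + (-c) • j := by
  simp only [map_add, map_smul, hσ.map_i, hσ.map_j, hσ.map_algebraMap]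
  simp only [Algebra.algebraMap_eq_smul_one]
  module

theorem IsConj.apply_apply (hσ : IsConj σ m n i j) (a b c : R) :
    σ (σ (algebraMap R A a + b • i + c • j)) = algebraMap R A a + b • i + c • j := by
  rw [hσ.apply, hσ.apply]
  simp only [Algebra.algebraMap_eq_smul_one]
  module

theorem IsConj.map_mul (hσ : IsConj σ m n i j) (h : Table m n i j) (a b c a' b' c' : R) :
    σ ((algebraMap R A a + b • i + c • j) * (algebraMap R A a' + b' • i + c' • j)) =
      σ (algebraMap R A a' + b' • i + c' • j) * σ (algebraMap R A a + b • i + c • j) := by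
  rw [h.mul_eq, hσ.apply, hσ.apply, hσ.apply, h.mul_eq]
  simp only [Algebra.algebraMap_eq_smul_one]
  module

theorem IsConj.mul_apply_self (hσ : IsConj σ m n i j) (h : Table m n i j) (a b c : R) :
    (algebraMap R A a + b • i + c • j) * σ (algebraMap R A a + b • i + c • j) =
      algebraMap R A (a * (a + b * n + c * m) + b * c * m * n) := by
  rw [hσ.apply, h.mul_eq]
  simp only [Algebra.algebraMap_eq_smul_one]
  module

end CaseE

open CaseE in
theorem case_E_standard_involution_general
    (R A : Type*) [CommRing R] [Ring A] [Algebra R A]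
    (m n : R) (bas : Module.Basis (Fin 3) R A) (h1 : bas 0 = 1)
    (i j : A) (hi : i = bas 1) (hj : j = bas 2)
    (hii : i * i = n • i) (hij : i * j = 0)
    (hji : j * i = algebraMap R A (-(m * n)) + m • i + n • j)
    (hjj : j * j = m • j)
    (σ : A →ₗ[R] A)
    (hσR : ∀ r : R, σ (algebraMap R A r) = algebraMap R A r)
    (hσi : σ i = algebraMap R A n - i) (hσj : σ j = algebraMap R A m - j) :
    (∀ x, σ (σ x) = x) ∧ σ 1 = 1 ∧ (∀ x y, σ (x * y) = σ y * σ x) ∧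
      (∀ x : A, ∃ r : R, x * σ x = algebraMap R A r) ∧
      (∀ a b c : R,
        (algebraMap R A a + b • i + c • j) * σ (algebraMap R A a + b • i + c • j) =
          algebraMap R A (a * (a + b * n + c * m) + b * c * m * n)) := by
  have htable : Table m n i j := ⟨hii, hij, hji, hjj⟩
  have hσ : IsConj σ m n i j := ⟨hσR, hσi, hσj⟩
  have coords (x : A) : ∃ a b c : R, x = algebraMap R A a + b • i + c • j := by
    subst hi hj
    exact bas.exists_eq_algebraMap_add_smul_add_smul h1 x
  refine ⟨fun x => ?_, by simpa using hσR 1, fun x y => ?_, fun x => ?_,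
    hσ.mul_apply_self htable⟩
  · obtain ⟨a, b, c, rfl⟩ := coords x
    exact hσ.apply_apply a b c
  · obtain ⟨a, b, c, rfl⟩ := coords x
    obtain ⟨a', b', c', rfl⟩ := coords y
    exact hσ.map_mul htable a b c a' b' c'
  · obtain ⟨a, b, c, rfl⟩ := coords x
    exact ⟨_, hσ.mul_apply_self htable a b c⟩

/-- For the rank-3 R-algebra with basis 1, i, j and multiplication i² = ni,
ij = 0, ji = -mn + mi + nj, j² = mj, the R-linear map fixing R and sending
i ↦ n - i, j ↦ m - j is a standard involution; in particular
(a + bi + cj)(a + bi + cj)‾ = a(a + bn + cm) + bcmn ∈ R. -/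
theorem case_E_standard_involution
    (R A : Type*) [CommRing R] [IsDomain R] [Ring A] [Algebra R A]
    (m n : R) (bas : Module.Basis (Fin 3) R A) (h1 : bas 0 = 1)
    (i j : A) (hi : i = bas 1) (hj : j = bas 2)
    (hii : i * i = n • i) (hij : i * j = 0)
    (hji : j * i = algebraMap R A (-(m * n)) + m • i + n • j)
    (hjj : j * j = m • j)
    (σ : A →ₗ[R] A)
    (hσR : ∀ r : R, σ (algebraMap R A r) = algebraMap R A r)
    (hσi : σ i = algebraMap R A n - i) (hσj : σ j = algebraMap R A m - j) :
    (∀ x, σ (σ x) = x) ∧ σ 1 = 1 ∧ (∀ x y, σ (x * y) = σ y * σ x) ∧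
      (∀ x : A, ∃ r : R, x * σ x = algebraMap R A r) ∧
      (∀ a b c : R,
        (algebraMap R A a + b • i + c • j) * σ (algebraMap R A a + b • i + c • j) =
          algebraMap R A (a * (a + b * n + c * m) + b * c * m * n)) :=
  case_E_standard_involution_general R A m n bas h1 i j hi hj hii hij hji hjj σ hσR hσi hσj
end

section
/- Let F be a field with char(F) ≠ 2 and let D be a division F-algebra of degree 2 (every element satisfies a monic quadratic over F, and some element does not lie in F). Then D is either a quadratic field extension of F or a quaternion algebra over F. -/
/-!
Call `x ∈ D` pure if `x²` is a scalar and `x` is not a nonzero scalar. Completing the square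
writes every element as a scalar plus a pure element, and the degree-two condition applied to
`x + y` and `x - y` shows that `xy + yx` is a scalar for pure `x, y`; so the pure elements form a
complement of `F` in `D`, carrying the symmetric form `xy + yx`. If they form a line `F i`, then
`D = F ⊕ F i` is commutative of dimension two. Otherwise orthogonalising gives anticommuting pure
`i, j` with nonzero squares `a, b`. A pure element anticommuting with `i` and `j` commutes with
`k = ij`, so it is a multiple of `k`; hence `1, i, j, k` span `D` and `ℍ[F,a,b] → D` is onto.
It is injective because `4ab · re q` is a combination of `q` and its conjugates by `i, j, k`, so
every `q` in the kernel has `q`, `q i`, `q j`, `q k` all of real part zero, i.e. `q = 0`.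
-/

open Quaternion

namespace Algebra

def IsQuadratic (F D : Type*) [Field F] [Ring D] [Algebra F D] : Prop :=
  ∀ x : D, ∃ t : F, x * x - t • x ∈ (⊥ : Subalgebra F D)

def IsPure (F : Type*) {D : Type*} [Field F] [Ring D] [Algebra F D] (x : D) : Prop :=
  x * x ∈ (⊥ : Subalgebra F D) ∧ (x ∈ (⊥ : Subalgebra F D) → x = 0)

variable {F D : Type*} [Field F] [Ring D] [Algebra F D]

theorem eq_zero_of_smul_mem_bot {x : D} (hx : x ∉ (⊥ : Subalgebra F D)) {c : F}
    (h : c • x ∈ (⊥ : Subalgebra F D)) : c = 0 := by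
  by_contra hc
  exact hx (by simpa [smul_smul, hc] using Subalgebra.smul_mem _ h c⁻¹)

theorem isPure_zero : IsPure F (0 : D) :=
  ⟨by simp, fun _ ↦ rfl⟩

namespace IsPure

variable {x y : D}

theorem smul (hx : IsPure F x) (c : F) : IsPure F (c • x) := by
  refine ⟨?_, fun h ↦ ?_⟩
  · simpa [smul_mul_smul_comm, smul_smul] using Subalgebra.smul_mem _ hx.1 (c * c)
  · rcases eq_or_ne c 0 with rfl | hc
    · exact zero_smul F x
    · rw [hx.2 (by simpa [smul_smul, hc] using Subalgebra.smul_mem _ h c⁻¹), smul_zero]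

theorem eq_smul_of_sub_smul_mem_bot (hchar : (2 : F) ≠ 0) (hx : IsPure F x) (hy : IsPure F y)
    (hy0 : y ∉ (⊥ : Subalgebra F D)) {c : F} (h : x - c • y ∈ (⊥ : Subalgebra F D)) :
    x = c • y := by
  obtain ⟨d, hd⟩ := Algebra.mem_bot.1 h
  have hxy : x = c • y + algebraMap F D d := by rw [hd, add_sub_cancel]
  have hsq : x * x - (c * c) • (y * y) - algebraMap F D (d * d) = (2 * c * d) • y := by
    simp only [hxy, Algebra.algebraMap_eq_smul_one, add_mul, mul_add, smul_mul_assoc,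
      mul_smul_comm, one_mul, mul_one]
    module
  have : 2 * c * d = 0 := eq_zero_of_smul_mem_bot hy0 (hsq ▸ sub_mem (sub_mem hx.1
    (Subalgebra.smul_mem _ hy.1 _)) (Subalgebra.algebraMap_mem _ _))
  rcases mul_eq_zero.1 this with h | rfl
  · obtain rfl : c = 0 := (mul_eq_zero.1 h).resolve_left hchar
    rw [zero_smul]
    exact hx.2 (by rw [hxy, zero_smul, zero_add]; exact Subalgebra.algebraMap_mem _ d)
  · rwa [map_zero, add_zero] at hxy

theorem anticomm_mem_bot (hchar : (2 : F) ≠ 0) (hD : IsQuadratic F D) (hx : IsPure F x)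
    (hy : IsPure F y) : x * y + y * x ∈ (⊥ : Subalgebra F D) := by
  by_cases hx0 : x ∈ (⊥ : Subalgebra F D)
  · simp [hx.2 hx0]
  by_cases hy0 : y ∈ (⊥ : Subalgebra F D)
  · simp [hy.2 hy0]
  obtain ⟨t, ht⟩ := hD (x + y)
  obtain ⟨t', ht'⟩ := hD (x - y)
  have hsum : x * y + y * x - t • x - t • y ∈ (⊥ : Subalgebra F D) := by
    convert sub_mem (sub_mem ht hx.1) hy.1 using 1
    simp only [add_mul, mul_add, smul_add]
    abel
  have hdiff : x * y + y * x + t' • x - t' • y ∈ (⊥ : Subalgebra F D) := by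
    convert sub_mem (add_mem hx.1 hy.1) ht' using 1
    simp only [sub_mul, mul_sub, smul_sub]
    abel
  have hlin : (t + t') • x + (t - t') • y ∈ (⊥ : Subalgebra F D) := by
    convert sub_mem hdiff hsum using 1
    module
  rcases eq_or_ne (t + t') 0 with hu | hu
  · have htt : t - t' = 0 := eq_zero_of_smul_mem_bot hy0 (by simpa [hu] using hlin)
    have ht0 : t = 0 := by
      have : 2 * t = 0 := by linear_combination hu + htt
      exact (mul_eq_zero.1 this).resolve_left hchar
    simpa [ht0] using hsum
  · have hxy := hx.eq_smul_of_sub_smul_mem_bot hchar hy hy0 (c := (t' - t) / (t + t'))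
      (by convert Subalgebra.smul_mem _ hlin (t + t')⁻¹ using 1
          rw [smul_add, smul_smul, smul_smul]
          field_simp
          module)
    rw [hxy, smul_mul_assoc, mul_smul_comm, ← two_smul F, smul_smul]
    exact Subalgebra.smul_mem _ hy.1 _

theorem add (hchar : (2 : F) ≠ 0) (hD : IsQuadratic F D) (hx : IsPure F x) (hy : IsPure F y) :
    IsPure F (x + y) := by
  refine ⟨?_, fun h ↦ ?_⟩
  · convert add_mem (add_mem hx.1 hy.1) (hx.anticomm_mem_bot hchar hD hy) using 1
    simp only [add_mul, mul_add]
    abel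
  · by_cases hx0 : x ∈ (⊥ : Subalgebra F D)
    · rw [hx.2 hx0, zero_add] at h ⊢
      exact hy.2 h
    · rw [hy.eq_smul_of_sub_smul_mem_bot hchar hx hx0 (c := -1) (by simpa [add_comm] using h)]
      module

theorem sub (hchar : (2 : F) ≠ 0) (hD : IsQuadratic F D) (hx : IsPure F x) (hy : IsPure F y) :
    IsPure F (x - y) := by
  simpa [sub_eq_add_neg] using hx.add hchar hD (hy.smul (-1))

theorem exists_mul_self_eq [NoZeroDivisors D] (hx : IsPure F x) (hx0 : x ≠ 0) :
    ∃ a : F, a ≠ 0 ∧ x * x = algebraMap F D a := by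
  obtain ⟨a, ha⟩ := Algebra.mem_bot.1 hx.1
  refine ⟨a, fun h ↦ hx0 ?_, ha.symm⟩
  rwa [h, map_zero, eq_comm, mul_self_eq_zero] at ha

theorem exists_anticomm_sub_smul (hchar : (2 : F) ≠ 0) (hD : IsQuadratic F D) (hx : IsPure F x)
    (hy : IsPure F y) {a : F} (ha : a ≠ 0) (hya : y * y = algebraMap F D a) :
    ∃ p : F, (x - p • y) * y = -(y * (x - p • y)) := by
  obtain ⟨s, hs⟩ := Algebra.mem_bot.1 (hy.anticomm_mem_bot hchar hD hx)
  refine ⟨s / (2 * a), ?_⟩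
  rw [← add_eq_zero_iff_eq_neg]
  calc (x - (s / (2 * a)) • y) * y + y * (x - (s / (2 * a)) • y)
      = (y * x + x * y) - (s / (2 * a) * 2) • (y * y) := by
        simp only [sub_mul, mul_sub, smul_mul_assoc, mul_smul_comm]
        module
    _ = 0 := by
        rw [← hs, hya, Algebra.algebraMap_eq_smul_one, Algebra.algebraMap_eq_smul_one, smul_smul,
          ← sub_smul]
        field_simp
        simp

end IsPure

theorem exists_eq_algebraMap_add_isPure (hchar : (2 : F) ≠ 0) (hD : IsQuadratic F D) (x : D) :
    ∃ (c : F) (v : D), IsPure F v ∧ x = algebraMap F D c + v := by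
  by_cases hx : x ∈ (⊥ : Subalgebra F D)
  · obtain ⟨c, rfl⟩ := Algebra.mem_bot.1 hx
    exact ⟨c, 0, isPure_zero, (add_zero _).symm⟩
  obtain ⟨t, ht⟩ := hD x
  refine ⟨t / 2, x - algebraMap F D (t / 2), ⟨?_, fun h ↦ ?_⟩, (add_sub_cancel _ _).symm⟩
  · convert add_mem ht (Subalgebra.algebraMap_mem (⊥ : Subalgebra F D) (t / 2 * (t / 2))) using 1
    simp only [Algebra.algebraMap_eq_smul_one, sub_mul, mul_sub, smul_mul_assoc, mul_smul_comm,
      one_mul, mul_one]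
    match_scalars
    · rfl
    · field_simp
      ring
    · ring
  · exact absurd (by simpa using add_mem h (Subalgebra.algebraMap_mem _ (t / 2))) hx

theorem commute_of_forall_eq_algebraMap_add_smul {i : D}
    (h : ∀ z : D, ∃ c d : F, z = algebraMap F D c + d • i) (x y : D) : x * y = y * x := by
  obtain ⟨c, d, rfl⟩ := h x
  obtain ⟨c', d', rfl⟩ := h y
  refine Commute.eq <| .add_left (.add_right ?_ ?_) (.add_right ?_ ?_) <;>
    simp [Algebra.commute_algebraMap_left, Algebra.commute_algebraMap_right, Commute.smul_left,
      Commute.smul_right]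

theorem finrank_eq_two_of_forall_eq_algebraMap_add_smul {i : D}
    (hi : i ∉ (⊥ : Subalgebra F D)) (h : ∀ z : D, ∃ c d : F, z = algebraMap F D c + d • i) :
    Module.finrank F D = 2 := by
  have : Nontrivial D := nontrivial_of_ne i 0 fun h ↦ hi (h ▸ zero_mem _)
  have hli : LinearIndependent F ![(1 : D), i] := by
    refine LinearIndependent.pair_iff.2 fun s t hst ↦ ?_
    have ht : t = 0 := eq_zero_of_smul_mem_bot hi <| by
      rw [eq_neg_of_add_eq_zero_right hst, ← Algebra.algebraMap_eq_smul_one]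
      exact neg_mem (Subalgebra.algebraMap_mem _ s)
    rw [ht, zero_smul, add_zero, smul_eq_zero] at hst
    exact ⟨hst.resolve_right one_ne_zero, ht⟩
  have hspan : ⊤ ≤ Submodule.span F (Set.range ![(1 : D), i]) := fun z _ ↦ by
    obtain ⟨c, d, rfl⟩ := h z
    rw [Matrix.range_cons, Matrix.range_cons, Matrix.range_empty, Set.union_empty,
      Set.singleton_union, Algebra.algebraMap_eq_smul_one]
    exact Submodule.mem_span_pair.2 ⟨c, d, rfl⟩
  rw [Module.finrank_eq_card_basis (Module.Basis.mk hli hspan), Fintype.card_fin]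

end Algebra

namespace QuaternionAlgebra

variable {F : Type*} [Field F] {a b : F}

-- Conjugation by `i`, `j` or `k` changes the signs of two of the imaginary parts.
theorem algebraMap_four_mul_mul_mul_re (q : ℍ[F,a,b]) :
    algebraMap F ℍ[F,a,b] (4 * a * b * q.re) =
      (a * b) • q + b • (⟨0, 1, 0, 0⟩ * q * ⟨0, 1, 0, 0⟩) + a • (⟨0, 0, 1, 0⟩ * q * ⟨0, 0, 1, 0⟩)
        - ⟨0, 0, 0, 1⟩ * q * ⟨0, 0, 0, 1⟩ := by
  ext <;> simp <;> ring

variable {A : Type*} [Ring A] [Nontrivial A] [Algebra F A]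

theorem re_eq_zero_of_algHom_eq_zero (hchar : (2 : F) ≠ 0) (ha : a ≠ 0) (hb : b ≠ 0)
    (f : ℍ[F,a,b] →ₐ[F] A) {q : ℍ[F,a,b]} (hq : f q = 0) : q.re = 0 := by
  have h : algebraMap F A (4 * a * b * q.re) = 0 := by
    rw [← f.commutes, algebraMap_four_mul_mul_mul_re]
    simp [hq]
  have h4 : (4 : F) ≠ 0 := by
    simpa [show (4 : F) = 2 * 2 by norm_num] using hchar
  rw [map_eq_zero_iff _ (algebraMap F A).injective] at h
  simpa [h4, ha, hb] using h

theorem algHom_injective (hchar : (2 : F) ≠ 0) (ha : a ≠ 0) (hb : b ≠ 0)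
    (f : ℍ[F,a,b] →ₐ[F] A) : Function.Injective f := by
  refine (injective_iff_map_eq_zero f).2 fun q hq ↦ ?_
  have hre (r : ℍ[F,a,b]) : (q * r).re = 0 :=
    re_eq_zero_of_algHom_eq_zero hchar ha hb f (by rw [map_mul, hq, zero_mul])
  have h1 := hre 1
  have hi := hre ⟨0, 1, 0, 0⟩
  have hj := hre ⟨0, 0, 1, 0⟩
  have hk := hre ⟨0, 0, 0, 1⟩
  simp only [mul_one, re_mul, mul_zero, zero_add, add_zero, zero_mul, sub_zero, mul_eq_zero,
    zero_sub, neg_eq_zero] at h1 hi hj hk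
  ext <;> simp_all

end QuaternionAlgebra

namespace QuaternionAlgebra.Basis

open Algebra

variable {F D : Type*} [Field F] [Ring D] [Algebra F D] {a b : F}

def ofAnticomm {i j : D} (hia : i * i = algebraMap F D a) (hjb : j * j = algebraMap F D b)
    (hji : j * i = -(i * j)) : Basis D a 0 b where
  i := i
  j := j
  k := i * j
  i_mul_i := by rw [hia, Algebra.algebraMap_eq_smul_one, zero_smul, add_zero]
  j_mul_j := by rw [hjb, Algebra.algebraMap_eq_smul_one]
  i_mul_j := rfl
  j_mul_i := by rw [hji, zero_smul, zero_sub]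

variable (Q : Basis D a 0 b)

theorem isPure_k (hchar : (2 : F) ≠ 0) (ha : a ≠ 0) : IsPure F Q.k := by
  refine ⟨?_, fun hk ↦ ?_⟩
  · rw [Q.k_mul_k, ← neg_smul, ← Algebra.algebraMap_eq_smul_one]
    exact Subalgebra.algebraMap_mem _ _
  · obtain ⟨e, he⟩ := Algebra.mem_bot.1 hk
    have hcomm : Q.i * Q.k = Q.k * Q.i := by rw [← he, Algebra.commutes]
    rw [Q.i_mul_k, Q.k_mul_i, zero_smul, add_zero, ← sub_eq_zero, neg_smul, sub_neg_eq_add,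
      ← two_smul F, smul_smul, smul_eq_zero] at hcomm
    have hj : Q.j = 0 := hcomm.resolve_left (mul_ne_zero hchar ha)
    rw [← Q.i_mul_j, hj, mul_zero]

theorem exists_eq_smul_k (hchar : (2 : F) ≠ 0) (hD : IsQuadratic F D) (ha : a ≠ 0) (hb : b ≠ 0)
    {w : D} (hw : IsPure F w) (hwi : w * Q.i = -(Q.i * w)) (hwj : w * Q.j = -(Q.j * w)) :
    ∃ r : F, w = r • Q.k := by
  obtain ⟨e, he⟩ := Algebra.mem_bot.1 (hw.anticomm_mem_bot hchar hD (Q.isPure_k hchar ha))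
  have hwk : Q.k * w = w * Q.k := by
    rw [← Q.i_mul_j, mul_assoc, ← neg_mul_neg, neg_mul, ← hwj, ← mul_assoc, ← neg_mul, ← hwi,
      mul_assoc]
  have hkk : (-(a * b)) • w = (e / 2) • Q.k := by
    calc (-(a * b)) • w = w * (Q.k * Q.k) := by
          rw [Q.k_mul_k, mul_neg, mul_smul_comm, mul_one, neg_smul]
      _ = ((2 : F)⁻¹ • (w * Q.k + Q.k * w)) * Q.k := by
        rw [hwk, ← two_smul F, smul_smul, inv_mul_cancel₀ hchar, one_smul, mul_assoc]
      _ = (e / 2) • Q.k := by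
        rw [← he, Algebra.algebraMap_eq_smul_one, smul_smul, smul_mul_assoc, one_mul,
          div_eq_inv_mul]
  refine ⟨(-(a * b))⁻¹ * (e / 2), ?_⟩
  rw [mul_smul, ← hkk, inv_smul_smul₀ (neg_ne_zero.2 (mul_ne_zero ha hb))]

theorem exists_eq_smul_add_smul_add_smul (hchar : (2 : F) ≠ 0) (hD : IsQuadratic F D)
    (ha : a ≠ 0) (hb : b ≠ 0) (hi : IsPure F Q.i) (hj : IsPure F Q.j) {v : D} (hv : IsPure F v) :
    ∃ p q r : F, v = p • Q.i + q • Q.j + r • Q.k := by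
  have hia : Q.i * Q.i = algebraMap F D a := by
    rw [Q.i_mul_i, zero_smul, add_zero, Algebra.algebraMap_eq_smul_one]
  have hjb : Q.j * Q.j = algebraMap F D b := by rw [Q.j_mul_j, Algebra.algebraMap_eq_smul_one]
  obtain ⟨p, hp⟩ := hv.exists_anticomm_sub_smul hchar hD hi ha hia
  have hv₁ := hv.sub hchar hD (hi.smul p)
  obtain ⟨q, hq⟩ := hv₁.exists_anticomm_sub_smul hchar hD hj hb hjb
  have hwi : (v - p • Q.i - q • Q.j) * Q.i = -(Q.i * (v - p • Q.i - q • Q.j)) := by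
    rw [sub_mul, hp, smul_mul_assoc, Q.j_mul_i, ← Q.i_mul_j]
    simp only [mul_sub, mul_smul_comm, zero_smul, zero_sub, smul_neg]
    abel
  obtain ⟨r, hr⟩ := Q.exists_eq_smul_k hchar hD ha hb (hv₁.sub hchar hD (hj.smul q)) hwi hq
  exact ⟨p, q, r, by rw [← hr]; abel⟩

theorem liftHom_surjective (hchar : (2 : F) ≠ 0) (hD : IsQuadratic F D) (ha : a ≠ 0) (hb : b ≠ 0)
    (hi : IsPure F Q.i) (hj : IsPure F Q.j) : Function.Surjective Q.liftHom := by
  intro z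
  obtain ⟨c, v, hv, rfl⟩ := exists_eq_algebraMap_add_isPure hchar hD z
  obtain ⟨p, q, r, rfl⟩ := Q.exists_eq_smul_add_smul_add_smul hchar hD ha hb hi hj hv
  exact ⟨⟨c, p, q, r⟩, by simp [lift, add_assoc]⟩

theorem nonempty_algEquiv [Nontrivial D] (hchar : (2 : F) ≠ 0) (hD : IsQuadratic F D)
    (ha : a ≠ 0) (hb : b ≠ 0) (hi : IsPure F Q.i) (hj : IsPure F Q.j) :
    Nonempty (D ≃ₐ[F] ℍ[F,a,b]) :=
  ⟨(AlgEquiv.ofBijective Q.liftHom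
    ⟨algHom_injective hchar ha hb _, Q.liftHom_surjective hchar hD ha hb hi hj⟩).symm⟩

end QuaternionAlgebra.Basis

/-- Extended Frobenius theorem: a division algebra of degree 2 over a field F
of characteristic ≠ 2 is either a quadratic field extension of F or a
quaternion algebra over F. -/
theorem degree_two_division_algebra_classification
    (F D : Type*) [Field F] [DivisionRing D] [Algebra F D]
    (hchar : (2 : F) ≠ 0)
    (hdeg2 : ∀ x : D, ∃ t n : F,
      x ^ 2 - algebraMap F D t * x + algebraMap F D n = 0)
    (hnot1 : ∃ x : D, x ∉ Set.range (algebraMap F D)) :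
    ((∀ x y : D, x * y = y * x) ∧ Module.finrank F D = 2) ∨
      (∃ a b : F, a ≠ 0 ∧ b ≠ 0 ∧ Nonempty (D ≃ₐ[F] ℍ[F, a, b])) := by
  have hD : Algebra.IsQuadratic F D := fun x ↦ by
    obtain ⟨t, n, h⟩ := hdeg2 x
    refine ⟨t, Algebra.mem_bot.2 ⟨-n, ?_⟩⟩
    rw [map_neg, ← sq, Algebra.smul_def, eq_comm, ← add_eq_zero_iff_eq_neg, h]
  obtain ⟨x, hx⟩ := hnot1
  obtain ⟨c, i, hi, rfl⟩ := Algebra.exists_eq_algebraMap_add_isPure hchar hD x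
  have hi0 : i ∉ (⊥ : Subalgebra F D) := fun h ↦
    hx (Algebra.mem_bot.1 (add_mem (Subalgebra.algebraMap_mem _ c) h))
  by_cases H : ∀ v : D, Algebra.IsPure F v → ∃ d : F, v = d • i
  · have hspan : ∀ z : D, ∃ c d : F, z = algebraMap F D c + d • i := fun z ↦ by
      obtain ⟨c, v, hv, rfl⟩ := Algebra.exists_eq_algebraMap_add_isPure hchar hD z
      obtain ⟨d, rfl⟩ := H v hv
      exact ⟨c, d, rfl⟩
    exact Or.inl ⟨Algebra.commute_of_forall_eq_algebraMap_add_smul hspan,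
      Algebra.finrank_eq_two_of_forall_eq_algebraMap_add_smul hi0 hspan⟩
  push Not at H
  obtain ⟨j₀, hj₀, hj₀i⟩ := H
  obtain ⟨a, ha, hia⟩ := hi.exists_mul_self_eq fun h ↦ hi0 (h ▸ zero_mem _)
  obtain ⟨p, hji⟩ := hj₀.exists_anticomm_sub_smul hchar hD hi ha hia
  have hj := hj₀.sub hchar hD (hi.smul p)
  obtain ⟨b, hb, hjb⟩ := hj.exists_mul_self_eq (sub_ne_zero.2 (hj₀i p))
  exact Or.inr ⟨a, b, ha, hb, (QuaternionAlgebra.Basis.ofAnticomm hia hjb hji).nonempty_algEquiv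
    hchar hD ha hb hi hj⟩
end
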